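/- arXiv:1103.3724 — 8 statements merged into one kernel-verified Lean document; each statement's English description precedes it below -/
import Mathlib

section
/- For every invertible 2×2 real matrix A = [[α,β],[γ,δ]] and all real numbers s, t, the map Φ : H → H defined by Φ(x,y,z) = (αx + βy, γx + δy, (αδ − βγ)z + (1/2)αγx² + (1/2)βδy² + βγxy + sx + ty) is a group automorphism of the Heisenberg group H. -/
set_option linter.unreachableTactic false
set_option linter.unusedTactic false

/-- The Heisenberg group: ℝ³ with (a,b,c)·(x,y,z) = (a+x, b+y, c+z+a·y). -/
@[ext]
structure Heis where
  x : ℝ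
  y : ℝ
  z : ℝ

namespace Heis

instance : Mul Heis := ⟨fun p q => ⟨p.x + q.x, p.y + q.y, p.z + q.z + p.x * q.y⟩⟩
instance : One Heis := ⟨⟨0, 0, 0⟩⟩
instance : Inv Heis := ⟨fun p => ⟨-p.x, -p.y, p.x * p.y - p.z⟩⟩

@[simp] theorem mul_x (p q : Heis) : (p * q).x = p.x + q.x := rfl
@[simp] theorem mul_y (p q : Heis) : (p * q).y = p.y + q.y := rfl
@[simp] theorem mul_z (p q : Heis) : (p * q).z = p.z + q.z + p.x * q.y := rfl
@[simp] theorem one_x : (1 : Heis).x = 0 := rfl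
@[simp] theorem one_y : (1 : Heis).y = 0 := rfl
@[simp] theorem one_z : (1 : Heis).z = 0 := rfl
@[simp] theorem inv_x (p : Heis) : p⁻¹.x = -p.x := rfl
@[simp] theorem inv_y (p : Heis) : p⁻¹.y = -p.y := rfl
@[simp] theorem inv_z (p : Heis) : p⁻¹.z = p.x * p.y - p.z := rfl

instance : Group Heis where
  mul := (· * ·)
  one := 1
  inv := (·⁻¹)
  mul_assoc p q r := by ext <;> simp <;> try ring
  one_mul p := by ext <;> simp
  mul_one p := by ext <;> simp
  inv_mul_cancel p := by ext <;> simp <;> try ring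

end Heis

theorem stmt1 (α β γ δ s t : ℝ) (hdet : α * δ - β * γ ≠ 0) :
    ∃ Φ : Heis ≃* Heis, ∀ p : Heis,
      Φ p = ⟨α * p.x + β * p.y, γ * p.x + δ * p.y,
             (α * δ - β * γ) * p.z + (1/2) * (α * γ) * p.x ^ 2 + (1/2) * (β * δ) * p.y ^ 2
               + (β * γ) * (p.x * p.y) + s * p.x + t * p.y⟩ := by

  set Δ := α * δ - β * γ with hΔ
  refine ⟨{ toFun := fun p => ⟨α * p.x + β * p.y, γ * p.x + δ * p.y,
              Δ * p.z + (1/2) * (α * γ) * p.x ^ 2 + (1/2) * (β * δ) * p.y ^ 2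
                + (β * γ) * (p.x * p.y) + s * p.x + t * p.y⟩
            invFun := fun q =>
              let x := (δ * q.x - β * q.y) / Δ
              let y := (α * q.y - γ * q.x) / Δ
              ⟨x, y, (q.z - (1/2) * (α * γ) * x ^ 2 - (1/2) * (β * δ) * y ^ 2
                - (β * γ) * (x * y) - s * x - t * y) / Δ⟩
            left_inv := ?_
            right_inv := ?_
            map_mul' := ?_ }, fun p => rfl⟩
  · intro p
    ext <;> simp only <;> field_simp <;> ring
  · intro q
    ext <;> simp only <;> field_simp <;> ring
  · intro p q
    ext <;> simp only [Heis.mul_x, Heis.mul_y, Heis.mul_z] <;> ring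
end

section
/- Every continuous group automorphism Φ of the Heisenberg group H has the following form: there exist an invertible 2×2 real matrix A = [[α,β],[γ,δ]] and real numbers s, t such that Φ(x,y,z) = (αx + βy, γx + δy, (αδ − βγ)z + (1/2)αγx² + (1/2)βδy² + βγxy + sx + ty) for all (x,y,z) ∈ H. -/
set_option linter.unreachableTactic false
set_option linter.unusedTactic false

/-- The Euclidean topology of ℝ³ on the Heisenberg group. -/
instance : TopologicalSpace Heis :=
  TopologicalSpace.induced (fun p => (p.x, p.y, p.z)) inferInstance

private lemma lin_aux (f : ℝ → ℝ) (hadd : ∀ u v, f (u + v) = f u + f v)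
    (hc : Continuous f) : ∀ r, f r = f 1 * r := by
  intro r
  have h := map_real_smul (AddMonoidHom.mk' f hadd) hc r 1
  simpa [smul_eq_mul, mul_comm] using h

/-- every continuous automorphism of the Heisenberg group has the stated form. -/
theorem stmt2 (Φ : Heis ≃* Heis) (hΦ : Continuous Φ) :
    ∃ α β γ δ s t : ℝ, α * δ - β * γ ≠ 0 ∧ ∀ p : Heis,
      Φ p = ⟨α * p.x + β * p.y, γ * p.x + δ * p.y,
             (α * δ - β * γ) * p.z + (1/2) * (α * γ) * p.x ^ 2 + (1/2) * (β * δ) * p.y ^ 2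
               + (β * γ) * (p.x * p.y) + s * p.x + t * p.y⟩ := by
  have hemb : Continuous (fun p : Heis => (p.x, p.y, p.z)) := continuous_induced_dom
  have hcx : Continuous (fun p : Heis => p.x) := hemb.fst
  have hcy : Continuous (fun p : Heis => p.y) := hemb.snd.fst
  have hcz : Continuous (fun p : Heis => p.z) := hemb.snd.snd
  have hA : Continuous (fun r : ℝ => (⟨r, 0, 0⟩ : Heis)) :=
    continuous_induced_rng.2 (by fun_prop)
  have hB : Continuous (fun r : ℝ => (⟨0, r, 0⟩ : Heis)) :=
    continuous_induced_rng.2 (by fun_prop)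
  have hmx : ∀ p q : Heis, (Φ (p * q)).x = (Φ p).x + (Φ q).x := fun p q => by
    rw [map_mul]; rfl
  have hmy : ∀ p q : Heis, (Φ (p * q)).y = (Φ p).y + (Φ q).y := fun p q => by
    rw [map_mul]; rfl
  have hmz : ∀ p q : Heis, (Φ (p * q)).z = (Φ p).z + (Φ q).z + (Φ p).x * (Φ q).y :=
    fun p q => by rw [map_mul]; rfl
  have haa : ∀ u v : ℝ, (⟨u + v, 0, 0⟩ : Heis) = ⟨u, 0, 0⟩ * ⟨v, 0, 0⟩ := by
    intro u v; ext <;> simp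
  have hbb : ∀ u v : ℝ, (⟨0, u + v, 0⟩ : Heis) = ⟨0, u, 0⟩ * ⟨0, v, 0⟩ := by
    intro u v; ext <;> simp
  set α := (Φ ⟨1, 0, 0⟩).x with hα
  set β := (Φ ⟨0, 1, 0⟩).x with hβ
  set γ := (Φ ⟨1, 0, 0⟩).y with hγ
  set δ := (Φ ⟨0, 1, 0⟩).y with hδ
  have hXa : ∀ r : ℝ, (Φ ⟨r, 0, 0⟩).x = α * r := by
    have := lin_aux (fun r => (Φ ⟨r, 0, 0⟩).x)
      (fun u v => by simp only [haa u v, hmx]) (hcx.comp (hΦ.comp hA))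
    simpa using this
  have hXb : ∀ r : ℝ, (Φ ⟨0, r, 0⟩).x = β * r := by
    have := lin_aux (fun r => (Φ ⟨0, r, 0⟩).x)
      (fun u v => by simp only [hbb u v, hmx]) (hcx.comp (hΦ.comp hB))
    simpa using this
  have hYa : ∀ r : ℝ, (Φ ⟨r, 0, 0⟩).y = γ * r := by
    have := lin_aux (fun r => (Φ ⟨r, 0, 0⟩).y)
      (fun u v => by simp only [haa u v, hmy]) (hcy.comp (hΦ.comp hA))
    simpa using this
  have hYb : ∀ r : ℝ, (Φ ⟨0, r, 0⟩).y = δ * r := by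
    have := lin_aux (fun r => (Φ ⟨0, r, 0⟩).y)
      (fun u v => by simp only [hbb u v, hmy]) (hcy.comp (hΦ.comp hB))
    simpa using this
  -- commutator formula in Heis
  have hcomm : ∀ a b : Heis, a * b * a⁻¹ * b⁻¹ = ⟨0, 0, a.x * b.y - b.x * a.y⟩ := by
    intro a b; ext <;> simp <;> ring
  -- the image of the center
  have hcen : ∀ w : ℝ, Φ ⟨0, 0, w⟩ = ⟨0, 0, (α * δ - β * γ) * w⟩ := by
    intro w
    have hd : (⟨0, 0, w⟩ : Heis)
        = ⟨1, 0, 0⟩ * ⟨0, w, 0⟩ * (⟨1, 0, 0⟩ : Heis)⁻¹ * (⟨0, w, 0⟩ : Heis)⁻¹ := by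
      rw [hcomm]; norm_num
    rw [hd, map_mul, map_mul, map_mul, map_inv, map_inv, hcomm,
      hXa 1, hXb w, hYa 1, hYb w]
    ext <;> simp <;> ring
  -- z-component along the axes
  have hZa : ∃ s : ℝ, ∀ r : ℝ, (Φ ⟨r, 0, 0⟩).z = (1/2) * (α * γ) * r ^ 2 + s * r := by
    set G : ℝ → ℝ := fun r => (Φ ⟨r, 0, 0⟩).z - (1/2) * (α * γ) * r ^ 2 with hG
    have hGadd : ∀ u v, G (u + v) = G u + G v := by
      intro u v
      simp only [hG]
      rw [haa u v, hmz, hXa u, hYa v]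
      ring
    have hGcont : Continuous G := (hcz.comp (hΦ.comp hA)).sub (by fun_prop)
    refine ⟨G 1, fun r => ?_⟩
    have := lin_aux G hGadd hGcont r
    simp only [hG] at this ⊢
    linarith
  have hZb : ∃ t : ℝ, ∀ r : ℝ, (Φ ⟨0, r, 0⟩).z = (1/2) * (β * δ) * r ^ 2 + t * r := by
    set G : ℝ → ℝ := fun r => (Φ ⟨0, r, 0⟩).z - (1/2) * (β * δ) * r ^ 2 with hG
    have hGadd : ∀ u v, G (u + v) = G u + G v := by
      intro u v
      simp only [hG]
      rw [hbb u v, hmz, hXb u, hYb v]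
      ring
    have hGcont : Continuous G := (hcz.comp (hΦ.comp hB)).sub (by fun_prop)
    refine ⟨G 1, fun r => ?_⟩
    have := lin_aux G hGadd hGcont r
    simp only [hG] at this ⊢
    linarith
  obtain ⟨s, hZa⟩ := hZa
  obtain ⟨t, hZb⟩ := hZb
  refine ⟨α, β, γ, δ, s, t, ?_, ?_⟩
  · intro h
    have h1 : Φ ⟨0, 0, 1⟩ = Φ 1 := by
      rw [hcen 1, map_one, h]
      ext <;> simp
    have h2 := Φ.injective h1
    have h3 : (⟨0, 0, 1⟩ : Heis).z = (1 : Heis).z := by rw [h2]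
    simpa using h3
  · intro p
    have hdec : p = ⟨p.x, 0, 0⟩ * ⟨0, p.y, 0⟩ * ⟨0, 0, p.z - p.x * p.y⟩ := by
      ext <;> simp
    conv_lhs => rw [hdec]
    rw [map_mul, map_mul, hcen (p.z - p.x * p.y)]
    ext
    · simp [hXa, hXb]
    · simp [hYa, hYb]
    · simp [hZa, hZb, hXa, hYb]
      ring
end

section
/- Let k be a positive integer and let Γ_k = {(x,y,z) ∈ H : x ∈ ℤ, y ∈ ℤ, kz ∈ ℤ}. If Φ is a continuous group automorphism of the Heisenberg group H with Φ(Γ_k) = Γ_k, then either Φ(0,0,z) = (0,0,z) for all z ∈ ℝ, or Φ(0,0,z) = (0,0,−z) for all z ∈ ℝ. -/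
/-!
An automorphism of `H` maps the centre `{(0,0,z)}` onto itself, and on it a continuous one is a
continuous additive map of `ℝ`, hence `z ↦ c z`. The centre of `Γ_k` is `(1/k)ℤ`, and
`Φ(Γ_k) = Γ_k` makes multiplication by `c` a bijection of `(1/k)ℤ`: both `c` and `1/c` are integers.
-/

set_option linter.unreachableTactic false
set_option linter.unusedTactic false

/-- The lattice Γ_k = {(x,y,z) ∈ H : x ∈ ℤ, y ∈ ℤ, kz ∈ ℤ}, as a set. -/
def GammaSet (k : ℕ) : Set Heis :=
  {p : Heis | (∃ m : ℤ, p.x = m) ∧ (∃ n : ℤ, p.y = n) ∧ (∃ l : ℤ, (k : ℝ) * p.z = l)}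

theorem eq_one_or_eq_neg_one_of_image_mul_eq {a c : ℝ} (ha : a ≠ 0)
    (h : (c * ·) '' {z | ∃ l : ℤ, a * z = l} = {z | ∃ l : ℤ, a * z = l}) :
    c = 1 ∨ c = -1 := by
  have hinv : a⁻¹ ∈ {z | ∃ l : ℤ, a * z = l} := ⟨1, by simp [ha]⟩
  obtain ⟨l, hl⟩ : c * a⁻¹ ∈ {z | ∃ l : ℤ, a * z = l} := h ▸ Set.mem_image_of_mem _ hinv
  obtain ⟨z, ⟨m, hm⟩, hz⟩ : a⁻¹ ∈ (c * ·) '' {z | ∃ l : ℤ, a * z = l} := by rwa [h]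
  have hc : c = l := by rw [← hl]; field_simp
  have hlm : (l : ℝ) * m = 1 := by
    rw [← hc, ← hm, mul_left_comm, show c * z = a⁻¹ from hz, mul_inv_cancel₀ ha]
  rw [hc]
  exact_mod_cast Int.eq_one_or_neg_one_of_mul_eq_one (by exact_mod_cast hlm)

theorem MulEquiv.image_center {G H : Type*} [Mul G] [Mul H] (Φ : G ≃* H) :
    Φ '' Set.center G = Set.center H := by
  ext y
  refine ⟨fun ⟨x, hx, hxy⟩ => hxy ▸ MulEquivClass.apply_mem_center Φ hx, fun hy => ?_⟩
  exact ⟨Φ.symm y, (MulEquivClass.apply_mem_center_iff Φ).1 (by simpa using hy), by simp⟩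

namespace Heis

def centralMk (z : ℝ) : Heis := ⟨0, 0, z⟩

theorem mem_center_iff (p : Heis) : p ∈ Set.center Heis ↔ p.x = 0 ∧ p.y = 0 := by
  rw [Semigroup.mem_center_iff]
  constructor
  · intro h
    have hx := congrArg Heis.z (h ⟨0, 1, 0⟩)
    have hy := congrArg Heis.z (h ⟨1, 0, 0⟩)
    simp only [mul_z] at hx hy
    constructor <;> linarith
  · rintro ⟨hx, hy⟩ q
    ext <;> simp [hx, hy, add_comm]

theorem range_centralMk : Set.range centralMk = Set.center Heis := by
  ext p
  rw [mem_center_iff]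
  refine ⟨fun ⟨z, hz⟩ => hz ▸ ⟨rfl, rfl⟩, fun ⟨hx, hy⟩ => ⟨p.z, ?_⟩⟩
  ext <;> simp [centralMk, hx, hy]

theorem centralMk_injective : Function.Injective centralMk :=
  fun _ _ h => congrArg Heis.z h

theorem centralMk_add (z w : ℝ) : centralMk (z + w) = centralMk z * centralMk w := by
  ext <;> simp [centralMk]

theorem continuous_centralMk : Continuous centralMk :=
  continuous_induced_rng.2 <| continuous_const.prodMk (continuous_const.prodMk continuous_id)

theorem continuous_z : Continuous Heis.z :=
  continuous_snd.comp <| continuous_snd.comp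
    (continuous_induced_dom : Continuous fun p : Heis => (p.x, p.y, p.z))

theorem exists_map_centralMk (Φ : Heis ≃* Heis) (hΦ : Continuous Φ) :
    ∃ c : ℝ, ∀ z, Φ (centralMk z) = centralMk (c * z) := by
  have hcentral (z : ℝ) : Φ (centralMk z) = centralMk (Φ (centralMk z)).z := by
    obtain ⟨w, hw⟩ : Φ (centralMk z) ∈ Set.range centralMk :=
      range_centralMk ▸ MulEquivClass.apply_mem_center Φ (range_centralMk ▸ ⟨z, rfl⟩)
    rw [← hw]; rfl
  let f : ℝ →+ ℝ := AddMonoidHom.mk' (fun z => (Φ (centralMk z)).z) fun z w => by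
    rw [centralMk_add, map_mul, hcentral z, hcentral w]
    simp [centralMk]
  have hf : Continuous f := continuous_z.comp (hΦ.comp continuous_centralMk)
  refine ⟨f 1, fun z => ?_⟩
  have hlin : f z = z * f 1 := by simpa using map_real_smul f hf z 1
  rw [hcentral z, mul_comm, ← hlin]
  rfl

theorem GammaSet_inter_center (k : ℕ) :
    GammaSet k ∩ Set.center Heis = centralMk '' {z | ∃ l : ℤ, (k : ℝ) * z = l} := by
  ext p
  rw [Set.mem_inter_iff, mem_center_iff]
  constructor
  · rintro ⟨⟨-, -, hz⟩, hx, hy⟩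
    exact ⟨p.z, hz, by ext <;> simp [centralMk, hx, hy]⟩
  · rintro ⟨z, hz, rfl⟩
    exact ⟨⟨⟨0, by simp [centralMk]⟩, ⟨0, by simp [centralMk]⟩, hz⟩, rfl, rfl⟩

end Heis

/-- a continuous automorphism of H preserving Γ_k acts on the center
as the identity or as z ↦ −z. -/
theorem stmt4 (k : ℕ) (hk : 0 < k) (Φ : Heis ≃* Heis) (hΦ : Continuous Φ)
    (hΓ : Φ '' GammaSet k = GammaSet k) :
    (∀ z : ℝ, Φ ⟨0, 0, z⟩ = ⟨0, 0, z⟩) ∨ (∀ z : ℝ, Φ ⟨0, 0, z⟩ = ⟨0, 0, -z⟩) := by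
  obtain ⟨c, hc⟩ := Heis.exists_map_centralMk Φ hΦ
  have hcomp : Φ ∘ Heis.centralMk = Heis.centralMk ∘ (c * ·) := funext hc
  have himage : (c * ·) '' {z | ∃ l : ℤ, (k : ℝ) * z = l} = {z | ∃ l : ℤ, (k : ℝ) * z = l} := by
    apply Heis.centralMk_injective.image_injective
    rw [← Set.image_comp, ← hcomp, Set.image_comp, ← Heis.GammaSet_inter_center,
      Set.image_inter Φ.injective, hΓ, Φ.image_center]
  rcases eq_one_or_eq_neg_one_of_image_mul_eq (Nat.cast_ne_zero.2 hk.ne') himage with rfl | rfl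
  · exact Or.inl fun z => by simpa [Heis.centralMk] using hc z
  · exact Or.inr fun z => by simpa [Heis.centralMk] using hc z
end

section
/- Let d be a metric on the Heisenberg group H which induces the Euclidean topology of ℝ³ and which is invariant under left multiplication, i.e., d(g·p, g·q) = d(p,q) for all g,p,q ∈ H. Let k be a positive integer, let f : H → H be continuous, and let Φ : H → H be a continuous group homomorphism such that f(γ·p) = Φ(γ)·f(p) for all γ ∈ Γ_k and all p ∈ H. Then there exists C > 0 such that d(f(p), Φ(p)) < C for all p ∈ H. -/
set_option linter.unreachableTactic false
set_option linter.unusedTactic false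

/-- if d is a left-invariant metric on H inducing the Euclidean topology,
f : H → H is continuous, Φ is a continuous homomorphism, and f(γ·p) = Φ(γ)·f(p) for all
γ ∈ Γ_k, then d(f(p), Φ(p)) is uniformly bounded. -/
theorem stmt5 (k : ℕ) (hk : 0 < k)
    (d : Heis → Heis → ℝ)
    (hd_eq : ∀ p q : Heis, d p q = 0 ↔ p = q)
    (hd_symm : ∀ p q : Heis, d p q = d q p)
    (hd_tri : ∀ p q r : Heis, d p r ≤ d p q + d q r)
    (hd_top : ∀ s : Set Heis, IsOpen s ↔ ∀ p ∈ s, ∃ ε > 0, {q : Heis | d p q < ε} ⊆ s)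
    (hd_inv : ∀ g p q : Heis, d (g * p) (g * q) = d p q)
    (f : Heis → Heis) (hf : Continuous f)
    (Φ : Heis →* Heis) (hΦ : Continuous Φ)
    (heq : ∀ γ ∈ GammaSet k, ∀ p : Heis, f (γ * p) = Φ γ * f p) :
    ∃ C > 0, ∀ p : Heis, d (f p) (Φ p) < C := by

  -- d is nonnegative
  have hd_nonneg : ∀ p q : Heis, 0 ≤ d p q := by
    intro p q
    have h1 : d p p = 0 := (hd_eq p p).mpr rfl
    have h2 := hd_tri p q p
    rw [h1, hd_symm q p] at h2
    linarith
  -- balls are open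
  have hball : ∀ (p : Heis) (ε : ℝ), IsOpen {q : Heis | d p q < ε} := by
    intro p ε
    rw [hd_top]
    intro r hr
    refine ⟨ε - d p r, by simpa using hr, fun q hq => ?_⟩
    simp only [Set.mem_setOf_eq] at *
    have := hd_tri p r q
    linarith
  -- joint continuity of d
  have hd_cont : Continuous (fun pq : Heis × Heis => d pq.1 pq.2) := by
    rw [continuous_iff_continuousAt]
    rintro ⟨p₀, q₀⟩
    rw [ContinuousAt, Metric.tendsto_nhds]
    intro ε hε
    have hopen : IsOpen {pq : Heis × Heis | d p₀ pq.1 < ε/2 ∧ d q₀ pq.2 < ε/2} :=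
      ((hball p₀ (ε/2)).preimage continuous_fst).inter
        ((hball q₀ (ε/2)).preimage continuous_snd)
    have hmem : {pq : Heis × Heis | d p₀ pq.1 < ε/2 ∧ d q₀ pq.2 < ε/2} ∈ nhds (p₀, q₀) := by
      refine hopen.mem_nhds ⟨?_, ?_⟩ <;>
        simp [(hd_eq p₀ p₀).mpr rfl, (hd_eq q₀ q₀).mpr rfl] <;> positivity
    filter_upwards [hmem] with pq hpq
    obtain ⟨h1, h2⟩ := hpq
    rw [Real.dist_eq, abs_lt]
    have t1 := hd_tri pq.1 p₀ q₀
    have t2 := hd_tri p₀ q₀ pq.2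
    have t3 := hd_tri p₀ pq.1 pq.2
    have t4 := hd_tri pq.1 pq.2 q₀
    have s1 := hd_symm p₀ pq.1
    have s2 := hd_symm q₀ pq.2
    have u1 := hd_tri pq.1 p₀ pq.2
    have v1 := hd_tri p₀ pq.1 q₀
    constructor <;> linarith
  -- continuity of p ↦ d (f p) (Φ p)
  have hg_cont : Continuous (fun p : Heis => d (f p) (Φ p)) :=
    hd_cont.comp (hf.prodMk hΦ)
  -- the fundamental domain
  let m : ℝ × ℝ × ℝ → Heis := fun v => ⟨v.1, v.2.1, v.2.2⟩
  have hm : Continuous m := continuous_induced_rng.mpr continuous_id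
  let Box : Set (ℝ × ℝ × ℝ) := Set.Icc (0:ℝ) 1 ×ˢ Set.Icc (0:ℝ) 1 ×ˢ Set.Icc (0:ℝ) 1
  have hBox : IsCompact Box := isCompact_Icc.prod (isCompact_Icc.prod isCompact_Icc)
  have hD : IsCompact (m '' Box) := hBox.image hm
  have hDne : (m '' Box).Nonempty := ⟨m (0,0,0), ⟨(0,0,0), by
    simp [Box, Set.mem_prod], rfl⟩⟩
  obtain ⟨q₀, hq₀, hmax⟩ := hD.exists_isMaxOn hDne hg_cont.continuousOn
  refine ⟨d (f q₀) (Φ q₀) + 1, by have := hd_nonneg (f q₀) (Φ q₀); linarith, fun p => ?_⟩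
  -- decompose p = γ * q
  set a : ℤ := ⌊p.x⌋ with ha
  set b : ℤ := ⌊p.y⌋ with hb
  set w : ℝ := (a:ℝ) * b + p.z - a * p.y with hw
  set γ : Heis := ⟨(a:ℝ), (b:ℝ), (⌊(k:ℝ) * w⌋ : ℝ) / k⟩ with hγdef
  have hkne : (k:ℝ) ≠ 0 := Nat.cast_ne_zero.mpr hk.ne'
  have hγ : γ ∈ GammaSet k := by
    refine ⟨⟨a, rfl⟩, ⟨b, rfl⟩, ⟨⌊(k:ℝ) * w⌋, ?_⟩⟩
    show (k:ℝ) * ((⌊(k:ℝ) * w⌋ : ℝ) / k) = _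
    field_simp
  set q : Heis := γ⁻¹ * p with hq
  have hqx : q.x = Int.fract p.x := by
    show -(a:ℝ) + p.x = _
    rw [Int.fract, ← ha]; ring
  have hqy : q.y = Int.fract p.y := by
    show -(b:ℝ) + p.y = _
    rw [Int.fract, ← hb]; ring
  have hz : q.z = w - (⌊(k:ℝ) * w⌋ : ℝ) / k := by
    show ((a:ℝ) * (b:ℝ) - (⌊(k:ℝ) * w⌋ : ℝ) / (k:ℝ)) + p.z + -(a:ℝ) * p.y = _
    rw [hw]; ring
  have hqz : (k:ℝ) * q.z = Int.fract ((k:ℝ) * w) := by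
    rw [hz]
    field_simp
    rw [Int.fract]
  have hqD : q ∈ m '' Box := by
    refine ⟨(q.x, q.y, q.z), ?_, rfl⟩
    have hkpos : (0:ℝ) < k := Nat.cast_pos.mpr hk
    have hz0 : 0 ≤ (k:ℝ) * q.z := hqz ▸ Int.fract_nonneg _
    have hz1 : (k:ℝ) * q.z < 1 := hqz ▸ Int.fract_lt_one _
    have hk1 : (1:ℝ) ≤ k := by exact_mod_cast hk
    refine ⟨⟨?_, ?_⟩, ⟨?_, ?_⟩, ⟨?_, ?_⟩⟩
    · rw [hqx]; exact Int.fract_nonneg _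
    · rw [hqx]; exact (Int.fract_lt_one _).le
    · rw [hqy]; exact Int.fract_nonneg _
    · rw [hqy]; exact (Int.fract_lt_one _).le
    · nlinarith
    · nlinarith
  have hpq : p = γ * q := by rw [hq, mul_inv_cancel_left]
  have key : d (f p) (Φ p) = d (f q) (Φ q) := by
    rw [hpq, heq γ hγ q, map_mul, hd_inv]
  rw [key]
  have hb2 : d (f q) (Φ q) ≤ d (f q₀) (Φ q₀) := hmax hqD
  linarith
end

section
/- Let T ∈ G, and suppose the characteristic polynomial of T factors over ℂ as (X − λ₁)(X − λ₂)(X − λ₃) with |λ₁| < 1, |λ₂| > 1, and |λ₃| = 1. Then λ₁, λ₂, λ₃ are all real, λ₃ = λ₁λ₂, and λ₃ ∈ {1, −1}. -/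
open Matrix Polynomial

/-- T belongs to G: the first two entries of the last column vanish and the (3,3) entry
equals the determinant of the upper-left 2×2 block. -/
def GPred (T : Matrix (Fin 3) (Fin 3) ℝ) : Prop :=
  T 0 2 = 0 ∧ T 1 2 = 0 ∧ T 2 2 = T 0 0 * T 1 1 - T 0 1 * T 1 0

/-! The last column of `T ∈ G` is `(0, 0, t)` with `t = T₂₂`, so `t` is an eigenvalue and
`det T = t · det A = t²`, where `A` is the upper-left `2 × 2` block. The roots of a real
polynomial are closed under conjugation, and the three roots have distinct moduli, so each is
real. Since `t² = λ₁λ₂λ₃` and `|λ₃| = 1`, `t = λ₁` would force `|λ₁| = |λ₂|` and `t = λ₂`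
likewise; hence `t = λ₃` and `λ₃ = λ₁λ₂`, a real number of modulus one. -/

namespace Matrix

variable {R n : Type*} [CommRing R] [Fintype n] [DecidableEq n]

theorem isRoot_charpoly_of_col_eq_zero (T : Matrix n n R) (j : n)
    (hcol : ∀ i, i ≠ j → T i j = 0) : T.charpoly.IsRoot (T j j) := by
  rw [IsRoot, charpoly, ← coe_evalRingHom, RingHom.map_det]
  refine det_eq_zero_of_column_eq_zero j fun i => ?_
  rcases eq_or_ne i j with rfl | hij
  · simp [charmatrix_apply_eq]
  · simp [charmatrix_apply_ne _ _ _ hij, hcol i hij]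

theorem map_det_eq_prod_of_charpoly_map_eq {S : Type*} [CommRing S] (f : R →+* S)
    (T : Matrix n n R) (l : n → S) (h : T.charpoly.map f = ∏ i, (X - C (l i))) :
    f T.det = ∏ i, l i := by
  rw [det_eq_sign_charpoly_coeff, map_mul, map_pow, map_neg, map_one, ← coeff_map, h,
    coeff_zero_eq_eval_zero, eval_prod]
  simp only [eval_sub, eval_X, eval_C, zero_sub, Finset.prod_neg, Finset.card_univ]
  rw [← mul_assoc, ← mul_pow, neg_one_mul, neg_neg, one_pow, one_mul]

end Matrix

theorem Polynomial.im_eq_zero_of_aeval_eq_zero {p : ℝ[X]} {z : ℂ} (hz : aeval z p = 0)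
    (huniq : ∀ w : ℂ, aeval w p = 0 → ‖w‖ = ‖z‖ → w = z) : z.im = 0 :=
  Complex.conj_eq_iff_im.1 <|
    huniq _ (by rw [aeval_conj, hz, map_zero]) (Complex.norm_conj z)

theorem eq_mul_of_sq_eq_mul_mul {K : Type*} [NormedField K] {t l₁ l₂ l₃ : K}
    (ht : t = l₁ ∨ t = l₂ ∨ t = l₃) (hsq : t ^ 2 = l₁ * l₂ * l₃) (hl₁ : l₁ ≠ 0)
    (h1 : ‖l₁‖ < 1) (h2 : 1 < ‖l₂‖) (h3 : ‖l₃‖ = 1) : l₃ = l₁ * l₂ := by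
  have hl₂ : l₂ ≠ 0 := norm_pos_iff.1 (by linarith)
  have hl₃ : l₃ ≠ 0 := norm_pos_iff.1 (by linarith)
  rcases ht with rfl | rfl | rfl
  · have : t = l₂ * l₃ := mul_left_cancel₀ hl₁ (by linear_combination hsq)
    have : ‖t‖ = ‖l₂‖ := by rw [this, norm_mul, h3, mul_one]
    linarith
  · have : t = l₁ * l₃ := mul_left_cancel₀ hl₂ (by linear_combination hsq)
    have : ‖t‖ = ‖l₁‖ := by rw [this, norm_mul, h3, mul_one]
    linarith
  · exact mul_left_cancel₀ hl₃ (by linear_combination hsq)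

theorem Complex.eq_one_or_eq_neg_one_of_im_eq_zero {z : ℂ} (him : z.im = 0) (hz : ‖z‖ = 1) :
    z = 1 ∨ z = -1 := by
  rw [← Complex.re_add_im z, him, Complex.ofReal_zero, zero_mul, add_zero] at hz ⊢
  rw [Complex.norm_real, Real.norm_eq_abs] at hz
  rcases abs_eq zero_le_one |>.1 hz with h | h <;> simp [h]

theorem GPred.det_eq {T : Matrix (Fin 3) (Fin 3) ℝ} (hG : GPred T) : T.det = T 2 2 ^ 2 := by
  obtain ⟨h02, h12, h22⟩ := hG
  rw [det_fin_three, h02, h12, h22]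
  ring

theorem GPred.isRoot_charpoly {T : Matrix (Fin 3) (Fin 3) ℝ} (hG : GPred T) :
    T.charpoly.IsRoot (T 2 2) :=
  T.isRoot_charpoly_of_col_eq_zero 2 fun i hi => by
    fin_cases i
    exacts [hG.1, hG.2.1, absurd rfl hi]

/-- if T ∈ G and its characteristic polynomial factors over ℂ as
(X−λ₁)(X−λ₂)(X−λ₃) with |λ₁| < 1, |λ₂| > 1 and |λ₃| = 1, then λ₁, λ₂, λ₃ are real,
λ₃ = λ₁λ₂, and λ₃ ∈ {1, −1}. -/
theorem stmt7 (T : Matrix (Fin 3) (Fin 3) ℝ) (hT : IsUnit T) (hG : GPred T)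
    (l₁ l₂ l₃ : ℂ)
    (hfac : T.charpoly.map (algebraMap ℝ ℂ) = (X - C l₁) * (X - C l₂) * (X - C l₃))
    (h1 : ‖l₁‖ < 1) (h2 : 1 < ‖l₂‖) (h3 : ‖l₃‖ = 1) :
    l₁.im = 0 ∧ l₂.im = 0 ∧ l₃.im = 0 ∧ l₃ = l₁ * l₂ ∧ (l₃ = 1 ∨ l₃ = -1) := by
  have hroots : ∀ w : ℂ, aeval w T.charpoly = 0 ↔ w = l₁ ∨ w = l₂ ∨ w = l₃ := fun w => by
    simp [← eval_map_algebraMap, hfac, sub_eq_zero, or_assoc]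
  have hreal : ∀ l, (l = l₁ ∨ l = l₂ ∨ l = l₃) → l.im = 0 := fun l hl =>
    im_eq_zero_of_aeval_eq_zero ((hroots l).2 hl) fun w hw hnorm => by
      rcases (hroots w).1 hw with rfl | rfl | rfl <;> rcases hl with rfl | rfl | rfl <;>
        first | rfl | linarith
  have hdet : (T.det : ℂ) = l₁ * l₂ * l₃ := by
    have := T.map_det_eq_prod_of_charpoly_map_eq (algebraMap ℝ ℂ) ![l₁, l₂, l₃]
      (by simp [Fin.prod_univ_three, hfac])
    simpa [Fin.prod_univ_three, mul_assoc] using this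
  have hl₁ : l₁ ≠ 0 := by
    rintro rfl
    simp [(Matrix.isUnit_iff_isUnit_det T).1 hT |>.ne_zero] at hdet
  have ht : aeval (T 2 2 : ℂ) T.charpoly = 0 := by
    rw [← Complex.coe_algebraMap, aeval_algebraMap_apply, coe_aeval_eq_eval,
      hG.isRoot_charpoly.eq_zero, map_zero]
  have hmul : l₃ = l₁ * l₂ :=
    eq_mul_of_sq_eq_mul_mul ((hroots _).1 ht) (by rw [← hdet, hG.det_eq]; push_cast; rfl)
      hl₁ h1 h2 h3
  have hl₃ := hreal l₃ (by simp)
  exact ⟨hreal l₁ (by simp), hreal l₂ (by simp), hl₃, hmul,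
    Complex.eq_one_or_eq_neg_one_of_im_eq_zero hl₃ h3⟩
end

section
/- Let T ∈ G, and suppose the characteristic polynomial of T factors over ℝ as (X − λ₁)(X − λ₂)(X − λ₃) with |λ₁| < 1, |λ₂| > 1, and |λ₃| = 1. Then there exists P ∈ G such that P·T·P⁻¹ is the diagonal matrix diag(λ₁, λ₂, λ₃). -/
open Matrix Polynomial

lemma key (a b c d u v l₁ l₂ l₃ al be : ℝ)
    (hs : a + d = l₁ + l₂) (hp : a*d - b*c = l₁*l₂)
    (hm : (l₃-l₁)*(l₃-l₂) ≠ 0)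
    (hq : (al*c+be*(l₁-d))*(al*(l₂-a)+be*b) - (al*(l₁-a)+be*b)*(al*c+be*(l₂-d)) ≠ 0)
    (T : Matrix (Fin 3) (Fin 3) ℝ)
    (hTd : T = !![a,b,0; c,d,0; u,v,l₃]) :
    ∃ P : Matrix (Fin 3) (Fin 3) ℝ, IsUnit P ∧ GPred P ∧
      P * T * P⁻¹ = Matrix.diagonal ![l₁,l₂,l₃] := by
  set m : ℝ := (l₃-l₁)*(l₃-l₂) with hmdef
  set q : ℝ := (al*c+be*(l₁-d))*(al*(l₂-a)+be*b) - (al*(l₁-a)+be*b)*(al*c+be*(l₂-d)) with hqdef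
  set P : Matrix (Fin 3) (Fin 3) ℝ :=
    !![m*(al*c+be*(l₁-d)), m*(al*(l₁-a)+be*b), 0;
       m*(al*c+be*(l₂-d)), m*(al*(l₂-a)+be*b), 0;
       -(m*q)*(u*(d-l₃)-v*c), -(m*q)*(-(u*b)+v*(a-l₃)), m^2*q] with hPdef
  have hdet : P.det = (m^2*q)^2 := by
    rw [hPdef, Matrix.det_fin_three]
    simp [Matrix.cons_val_zero, Matrix.cons_val_one]
    ring
  have hPu : IsUnit P := by
    rw [Matrix.isUnit_iff_isUnit_det, hdet, isUnit_iff_ne_zero]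
    positivity
  have hPT : P * T = Matrix.diagonal ![l₁,l₂,l₃] * P := by
    ext i j
    fin_cases i <;> fin_cases j <;>
      simp [hPdef, hTd, Matrix.mul_apply, Fin.sum_univ_three, Matrix.diagonal]
    · linear_combination (m*be*l₁)*hs - (m*be)*hp
    · linear_combination (m*al*l₁)*hs - (m*al)*hp
    · linear_combination (m*be*l₂)*hs - (m*be)*hp
    · linear_combination (m*al*l₂)*hs - (m*al)*hp
    · linear_combination (m*q*u*l₃)*hs - (m*q*u)*hp + (m*q*u)*hmdef
    · linear_combination (m*q*v*l₃)*hs - (m*q*v)*hp + (m*q*v)*hmdef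
    · ring
  refine ⟨P, hPu, ?_, ?_⟩
  · refine ⟨by simp [hPdef], by simp [hPdef], ?_⟩
    simp [hPdef]
    ring
  · rw [hPT, Matrix.mul_assoc,
      Matrix.mul_nonsing_inv P ((Matrix.isUnit_iff_isUnit_det P).mp hPu), Matrix.mul_one]

/-- if T ∈ G has characteristic polynomial (X−λ₁)(X−λ₂)(X−λ₃) over ℝ with
|λ₁| < 1, |λ₂| > 1, |λ₃| = 1, then there is P ∈ G with P·T·P⁻¹ = diag(λ₁,λ₂,λ₃). -/
theorem stmt10 (T : Matrix (Fin 3) (Fin 3) ℝ) (hT : IsUnit T) (hG : GPred T)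
    (l₁ l₂ l₃ : ℝ)
    (hfac : T.charpoly = (X - C l₁) * (X - C l₂) * (X - C l₃))
    (h1 : |l₁| < 1) (h2 : 1 < |l₂|) (h3 : |l₃| = 1) :
    ∃ P : Matrix (Fin 3) (Fin 3) ℝ, IsUnit P ∧ GPred P ∧
      P * T * P⁻¹ = Matrix.diagonal ![l₁, l₂, l₃] := by
  obtain ⟨h02, h12, h22⟩ := hG
  set a := T 0 0 with ha; set b := T 0 1 with hb; set c := T 1 0 with hc
  set d := T 1 1 with hd; set u := T 2 0 with hu; set v := T 2 1 with hv
  set δ := a*d - b*c with hδ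
  -- characteristic polynomial
  have hch : T.charpoly = (X - C δ) * (X^2 - C (a + d) * X + C δ) := by
    have hCd : (C δ : ℝ[X]) = C a * C d - C b * C c := by
      rw [hδ, C_sub, C_mul, C_mul]
    rw [Matrix.charpoly, Matrix.det_fin_three]
    simp [charmatrix_apply_eq, charmatrix_apply_ne, h02, h12, h22, ← ha, ← hb, ← hc, ← hd]
    simp only [hCd, C_add]
    ring
  have h' : (X - C δ) * (X^2 - C (a + d) * X + C δ)
      = (X - C l₁) * (X - C l₂) * (X - C l₃) := by rw [← hch, hfac]
  -- coefficient extraction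
  have h'' : X^3 - C ((a+d) + δ) * X^2 + C (δ + (a+d)*δ) * X - C (δ*δ)
      = X^3 - C (l₁+l₂+l₃) * X^2 + C (l₁*l₂+l₁*l₃+l₂*l₃) * X - C (l₁*l₂*l₃) := by
    have h2' := h'
    simp only [C_add, C_mul] at h2' ⊢
    linear_combination h2'
  have c0 := congrArg (fun p => coeff p 0) h''
  have c2 := congrArg (fun p => coeff p 2) h''
  simp only [coeff_add, coeff_sub, coeff_C_mul, coeff_X_pow, coeff_C, coeff_X] at c0 c2
  norm_num at c0 c2
  -- δ ≠ 0
  have hdT : T.det = δ * δ := by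
    rw [Matrix.det_fin_three, h02, h12, h22]; ring
  have hδ0 : δ ≠ 0 := by
    have := (Matrix.isUnit_iff_isUnit_det T).mp hT
    rw [hdT, isUnit_iff_ne_zero] at this
    exact fun h => this (by rw [h, mul_zero])
  -- δ is a root
  have hev := congrArg (eval δ) h'
  simp only [eval_mul, eval_sub, eval_add, eval_pow, eval_X, eval_C, sub_self, zero_mul] at hev
  -- δ = l₃
  have habs : ∀ x y : ℝ, |x| < 1 → 1 < |y| → x ≠ y := by
    intro x y hx hy hxy; rw [hxy] at hx; linarith
  have hl12 : l₁ ≠ l₂ := habs l₁ l₂ h1 h2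
  have hδ3 : δ = l₃ := by
    rcases mul_eq_zero.mp hev.symm with h0 | h0
    · rcases mul_eq_zero.mp h0 with h0 | h0
      · exfalso
        have hδ1 : δ = l₁ := sub_eq_zero.mp h0
        have hl1 : l₁ ≠ 0 := fun hz => hδ0 (by rw [hδ1, hz])
        have h123 : l₁ = l₂ * l₃ := by
          apply mul_left_cancel₀ hl1
          linear_combination c0 - (l₁ + δ) * hδ1
        have : |l₁| = |l₂| := by rw [h123, abs_mul, h3, mul_one]
        linarith
      · exfalso
        have hδ2 : δ = l₂ := sub_eq_zero.mp h0
        have hl2 : l₂ ≠ 0 := fun hz => hδ0 (by rw [hδ2, hz])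
        have h123 : l₂ = l₁ * l₃ := by
          apply mul_left_cancel₀ hl2
          linear_combination c0 - (l₂ + δ) * hδ2
        have : |l₂| = |l₁| := by rw [h123, abs_mul, h3, mul_one]
        linarith
    · exact sub_eq_zero.mp h0
  have hl30 : l₃ ≠ 0 := fun h => by rw [h, abs_zero] at h3; linarith
  -- l₁ * l₂ = l₃
  have hprod : l₁ * l₂ = l₃ := by
    apply mul_right_cancel₀ hl30
    linear_combination -c0 + (l₃ + δ) * hδ3
  have hs : a + d = l₁ + l₂ := by rw [hδ3] at c2; linarith
  have hp : a * d - b * c = l₁ * l₂ := by rw [← hδ, hδ3, hprod]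
  have hm : (l₃ - l₁) * (l₃ - l₂) ≠ 0 := by
    apply mul_ne_zero <;> rw [sub_ne_zero] <;> intro h
    · rw [← h, h3] at h1; linarith
    · rw [← h, h3] at h2; linarith
  have hTd : T = !![a, b, 0; c, d, 0; u, v, l₃] := by
    ext i j
    fin_cases i <;> fin_cases j <;>
      simp [← ha, ← hb, ← hc, ← hd, ← hu, ← hv, h02, h12]
    rw [h22, hδ3]
  -- choose α, β
  by_cases hcz : c ≠ 0
  · refine key a b c d u v l₁ l₂ l₃ 1 0 hs hp hm ?_ T hTd
    have he : (1*c+0*(l₁-d))*(1*(l₂-a)+0*b) - (1*(l₁-a)+0*b)*(1*c+0*(l₂-d))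
        = c * (l₂ - l₁) := by ring
    rw [he]
    exact mul_ne_zero hcz (sub_ne_zero.mpr (Ne.symm hl12))
  · push_neg at hcz
    by_cases hbz : b ≠ 0
    · refine key a b c d u v l₁ l₂ l₃ 0 1 hs hp hm ?_ T hTd
      have he : (0*c+1*(l₁-d))*(0*(l₂-a)+1*b) - (0*(l₁-a)+1*b)*(0*c+1*(l₂-d))
          = b * (l₁ - l₂) := by ring
      rw [he]
      exact mul_ne_zero hbz (sub_ne_zero.mpr hl12)
    · push_neg at hbz
      refine key a b c d u v l₁ l₂ l₃ 1 1 hs hp hm ?_ T hTd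
      have he : (1*c+1*(l₁-d))*(1*(l₂-a)+1*b) - (1*(l₁-a)+1*b)*(1*c+1*(l₂-d))
          = (a - d) * (l₂ - l₁) := by rw [hbz, hcz]; ring
      rw [he]
      apply mul_ne_zero _ (sub_ne_zero.mpr (Ne.symm hl12))
      have hroot : (a - l₁) * (a - l₂) = 0 := by
        rw [hbz, hcz] at hp
        linear_combination a*hs - hp
      rw [sub_ne_zero]
      rcases mul_eq_zero.mp hroot with h0 | h0
      · have ha1 : a = l₁ := by linarith [sub_eq_zero.mp h0]
        have hd2 : d = l₂ := by linarith
        rw [ha1, hd2]; exact hl12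
      · have ha2 : a = l₂ := by linarith [sub_eq_zero.mp h0]
        have hd1 : d = l₁ := by linarith
        rw [ha2, hd1]; exact Ne.symm hl12
end

section
/- Let λ > 1, x₀ > 0, c > 0, let Λ : ℝ³ → ℝ³ be the map Λ(x,y,z) = (λ⁻¹x, λy, z), and let f : ℝ³ → ℝ³ be a map such that: (i) for all p with |π_s(p)| ≤ x₀ one has |π_s(f(p))| ≤ x₀, and (ii) for all p with |π_s(p)| ≤ x₀ one has ‖f(p) − Λ(p)‖ ≤ c in the Euclidean norm. Then: (a) for all y, z > 0, f(B(x₀,y,z)) ⊆ B(x₀, λy + c, z + c); and (b) for every β > λ there exists y₀ > 0 such that for all y > y₀, all z > 0, and all positive integers n, fⁿ(B(x₀,y,z)) ⊆ B(x₀, βⁿy, z + nc). -/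
/-- The box B(a,b,d) = {(x,y,z) ∈ ℝ³ : |x| ≤ a, |y| ≤ b, |z| ≤ d}. -/
def Box (a b d : ℝ) : Set (ℝ × ℝ × ℝ) :=
  {p : ℝ × ℝ × ℝ | |p.1| ≤ a ∧ |p.2.1| ≤ b ∧ |p.2.2| ≤ d}

/-!
Outside the contracting direction, f moves a point by at most c from Λ(p), so one step maps
B(x₀, y, z) into B(x₀, λy + c, z + c). Iterating, the y-bound obeys yₙ₊₁ = λyₙ + c, which stays
below βⁿy as soon as c ≤ (β − λ)y, i.e. for y > c / (β − λ).
-/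

lemma Box_mono {a a' b b' d d' : ℝ} (ha : a ≤ a') (hb : b ≤ b') (hd : d ≤ d') :
    Box a b d ⊆ Box a' b' d' :=
  fun _ ⟨h₁, h₂, h₃⟩ => ⟨h₁.trans ha, h₂.trans hb, h₃.trans hd⟩

lemma abs_le_of_sqrt_sq_add_sq_add_sq_le {u v w c : ℝ} (h : √(u ^ 2 + v ^ 2 + w ^ 2) ≤ c) :
    |v| ≤ c ∧ |w| ≤ c :=
  ⟨(Real.abs_le_sqrt (by nlinarith [sq_nonneg u, sq_nonneg w])).trans h,
    (Real.abs_le_sqrt (by nlinarith [sq_nonneg u, sq_nonneg v])).trans h⟩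

lemma abs_le_of_abs_sub_le {a b c : ℝ} (h : |a - b| ≤ c) : |a| ≤ |b| + c := by
  have := abs_sub_abs_le_abs_sub a b
  linarith

section OneStep

variable {lam x₀ c : ℝ} {f : ℝ × ℝ × ℝ → ℝ × ℝ × ℝ}

lemma image_Box_subset (hlam : 0 ≤ lam)
    (hinv : ∀ p : ℝ × ℝ × ℝ, |p.1| ≤ x₀ → |(f p).1| ≤ x₀)
    (hclose : ∀ p : ℝ × ℝ × ℝ, |p.1| ≤ x₀ →
      √(((f p).1 - lam⁻¹ * p.1) ^ 2 + ((f p).2.1 - lam * p.2.1) ^ 2 +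
        ((f p).2.2 - p.2.2) ^ 2) ≤ c)
    (y z : ℝ) : f '' Box x₀ y z ⊆ Box x₀ (lam * y + c) (z + c) := by
  rintro _ ⟨p, ⟨hp₁, hp₂, hp₃⟩, rfl⟩
  obtain ⟨hy, hz⟩ := abs_le_of_sqrt_sq_add_sq_add_sq_le (hclose p hp₁)
  have hlam_y : |lam * p.2.1| ≤ lam * y := by
    rw [abs_mul, abs_of_nonneg hlam]
    exact mul_le_mul_of_nonneg_left hp₂ hlam
  refine ⟨hinv p hp₁, ?_, ?_⟩
  · linarith [abs_le_of_abs_sub_le hy]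
  · linarith [abs_le_of_abs_sub_le hz]

end OneStep

lemma iterate_image_Box_subset {lam x₀ c β y : ℝ} {f : ℝ × ℝ × ℝ → ℝ × ℝ × ℝ}
    (hstep : ∀ y z : ℝ, f '' Box x₀ y z ⊆ Box x₀ (lam * y + c) (z + c))
    (hβ : 1 ≤ β) (hc : 0 ≤ c) (hy : c ≤ (β - lam) * y) (z : ℝ) (n : ℕ) :
    f^[n] '' Box x₀ y z ⊆ Box x₀ (β ^ n * y) (z + n * c) := by
  induction n with
  | zero => simp
  | succ n ih =>
    have hgrowth : lam * (β ^ n * y) + c ≤ β ^ (n + 1) * y := by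
      have : (β - lam) * y ≤ (β - lam) * y * β ^ n :=
        le_mul_of_one_le_right (hc.trans hy) (one_le_pow₀ hβ)
      rw [pow_succ]
      linarith
    rw [Function.iterate_succ', Set.image_comp]
    calc f '' (f^[n] '' Box x₀ y z) ⊆ f '' Box x₀ (β ^ n * y) (z + n * c) := Set.image_mono ih
      _ ⊆ Box x₀ (lam * (β ^ n * y) + c) (z + n * c + c) := hstep _ _
      _ ⊆ Box x₀ (β ^ (n + 1) * y) (z + ↑(n + 1) * c) :=
        Box_mono le_rfl hgrowth (by push_cast; linarith)

theorem stmt15_general (lam x₀ c : ℝ) (hlam : 1 < lam) (hc : 0 < c)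
    (f : ℝ × ℝ × ℝ → ℝ × ℝ × ℝ)
    (hinv : ∀ p : ℝ × ℝ × ℝ, |p.1| ≤ x₀ → |(f p).1| ≤ x₀)
    (hclose : ∀ p : ℝ × ℝ × ℝ, |p.1| ≤ x₀ →
      Real.sqrt (((f p).1 - lam⁻¹ * p.1) ^ 2 + ((f p).2.1 - lam * p.2.1) ^ 2 +
        ((f p).2.2 - p.2.2) ^ 2) ≤ c) :
    (∀ y z : ℝ, 0 < y → 0 < z →
      f '' Box x₀ y z ⊆ Box x₀ (lam * y + c) (z + c)) ∧
    (∀ β : ℝ, lam < β → ∃ y₀ > 0, ∀ y z : ℝ, y₀ < y → 0 < z → ∀ n : ℕ, 0 < n →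
      f^[n] '' Box x₀ y z ⊆ Box x₀ (β ^ n * y) (z + n * c)) := by
  have hstep := image_Box_subset (by linarith) hinv hclose
  refine ⟨fun y z _ _ => hstep y z, fun β hβ => ?_⟩
  have hgap : 0 < β - lam := sub_pos.mpr hβ
  refine ⟨c / (β - lam), div_pos hc hgap, fun y z hy _ n _ => ?_⟩
  have hcy : c ≤ (β - lam) * y := by
    rw [div_lt_iff₀ hgap] at hy
    linarith
  exact iterate_image_Box_subset hstep (by linarith) hc.le hcy z n

/-- let Λ(x,y,z) = (λ⁻¹x, λy, z) and f satisfy (i) |π_s| ≤ x₀ is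
f-invariant and (ii) ‖f(p) − Λ(p)‖ ≤ c (Euclidean norm) whenever |π_s(p)| ≤ x₀. Then
(a) f(B(x₀,y,z)) ⊆ B(x₀, λy+c, z+c) for all y,z > 0, and (b) for every β > λ there is
y₀ > 0 with fⁿ(B(x₀,y,z)) ⊆ B(x₀, βⁿy, z+nc) for all y > y₀, z > 0 and n ≥ 1. -/
theorem stmt15 (lam x₀ c : ℝ) (hlam : 1 < lam) (hx₀ : 0 < x₀) (hc : 0 < c)
    (f : ℝ × ℝ × ℝ → ℝ × ℝ × ℝ)
    (hinv : ∀ p : ℝ × ℝ × ℝ, |p.1| ≤ x₀ → |(f p).1| ≤ x₀)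
    (hclose : ∀ p : ℝ × ℝ × ℝ, |p.1| ≤ x₀ →
      Real.sqrt (((f p).1 - lam⁻¹ * p.1) ^ 2 + ((f p).2.1 - lam * p.2.1) ^ 2 +
        ((f p).2.2 - p.2.2) ^ 2) ≤ c) :
    (∀ y z : ℝ, 0 < y → 0 < z →
      f '' Box x₀ y z ⊆ Box x₀ (lam * y + c) (z + c)) ∧
    (∀ β : ℝ, lam < β → ∃ y₀ > 0, ∀ y z : ℝ, y₀ < y → 0 < z → ∀ n : ℕ, 0 < n →
      f^[n] '' Box x₀ y z ⊆ Box x₀ (β ^ n * y) (z + n * c)) :=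
  stmt15_general lam x₀ c hlam hc f hinv hclose
end

section
/- Let λ > 1 and C > 0, and let f : ℝ³ → ℝ³ be a bijective map such that |π_u(f(p)) − λ·π_u(p)| ≤ C for all p ∈ ℝ³, where π_u(x,y,z) = y. Then for every α with 0 < α < λ there exists M > 0 such that for all p, q ∈ ℝ³ and every positive integer n: if |π_u(p) − π_u(q)| ≥ M, then |π_u(fⁿ(p)) − π_u(fⁿ(q))| > αⁿ. -/
/-- if λ > 1, C > 0 and f : ℝ³ → ℝ³ is a bijection with
|π_u(f(p)) − λ·π_u(p)| ≤ C for all p (π_u being the second coordinate), then for every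
0 < α < λ there is M > 0 such that |π_u(p) − π_u(q)| ≥ M implies
|π_u(fⁿ(p)) − π_u(fⁿ(q))| > αⁿ for every n ≥ 1. -/
theorem stmt16 (lam C : ℝ) (hlam : 1 < lam) (hC : 0 < C)
    (f : ℝ × ℝ × ℝ → ℝ × ℝ × ℝ) (hbij : Function.Bijective f)
    (hf : ∀ p : ℝ × ℝ × ℝ, |(f p).2.1 - lam * p.2.1| ≤ C)
    (α : ℝ) (hα0 : 0 < α) (hαlam : α < lam) :
    ∃ M > 0, ∀ p q : ℝ × ℝ × ℝ, ∀ n : ℕ, 0 < n →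
      M ≤ |p.2.1 - q.2.1| →
      α ^ n < |(f^[n] p).2.1 - (f^[n] q).2.1| := by
  set γ : ℝ := max α 1 with hγdef
  have hγ1 : (1:ℝ) ≤ γ := le_max_right _ _
  have hαγ : α ≤ γ := le_max_left _ _
  have hγlam : γ < lam := max_lt hαlam hlam
  have hsub : 0 < lam - γ := by linarith
  set M : ℝ := 2*C/(lam-γ) + 2 with hMdef
  have hMpos : 0 < M := by positivity
  have hM1 : 1 < M := by
    have h0 : 0 < 2*C/(lam-γ) := by positivity
    rw [hMdef]; linarith
  have key : ∀ r s : ℝ × ℝ × ℝ,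
      lam * |r.2.1 - s.2.1| - 2*C ≤ |(f r).2.1 - (f s).2.1| := by
    intro r s
    have h1 := hf r
    have h2 := hf s
    have e : lam*(r.2.1 - s.2.1)
        = -((f r).2.1 - lam*r.2.1) + ((f r).2.1 - (f s).2.1)
          + ((f s).2.1 - lam*s.2.1) := by ring
    have h3 := abs_add_le (-((f r).2.1 - lam*r.2.1) + ((f r).2.1 - (f s).2.1))
      ((f s).2.1 - lam*s.2.1)
    have h4 := abs_add_le (-((f r).2.1 - lam*r.2.1)) ((f r).2.1 - (f s).2.1)
    rw [abs_neg] at h4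
    have h5 : |lam*(r.2.1 - s.2.1)| = lam * |r.2.1 - s.2.1| := by
      rw [abs_mul, abs_of_pos (by linarith : (0:ℝ) < lam)]
    rw [e] at h5
    linarith
  refine ⟨M, hMpos, ?_⟩
  intro p q n hn hM
  have main : ∀ m : ℕ, γ^m * M ≤ |(f^[m] p).2.1 - (f^[m] q).2.1| := by
    intro m
    induction m with
    | zero => simpa using hM
    | succ k ih =>
      rw [Function.iterate_succ_apply', Function.iterate_succ_apply']
      have hk := key (f^[k] p) (f^[k] q)
      have hγk : (1:ℝ) ≤ γ^k := one_le_pow₀ hγ1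
      have hcancel : (2*C/(lam-γ)) * (lam-γ) = 2*C :=
        div_mul_cancel₀ _ (ne_of_gt hsub)
      have hstep : γ^(k+1) * M ≤ lam * (γ^k * M) - 2*C := by
        have hMlg : M * (lam - γ) = 2*C + 2*(lam-γ) := by
          rw [hMdef]; field_simp
        have : 2*C ≤ γ^k * (M * (lam - γ)) := by
          nlinarith [hsub, hC]
        have hpow : γ^(k+1) = γ^k * γ := pow_succ γ k
        nlinarith [this]
      have hlam0 : (0:ℝ) < lam := by linarith
      nlinarith [mul_le_mul_of_nonneg_left ih hlam0.le]
  have h1 : α^n ≤ γ^n := pow_le_pow_left₀ hα0.le hαγ n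
  have h2 : γ^n < γ^n * M := by
    have hp : (0:ℝ) < γ^n := pow_pos (by linarith) n
    nlinarith
  have := main n
  linarith
end
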